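/- Every cycle C_n with n ≥ 3 is free (3b, b)-choosable for every positive integer b. -/

import Mathlib

/-!
Colour greedily along the path `v₀, v₀ + 1, v₀ + 2, …`, starting with the prescribed set `c₀`:
each new vertex must avoid the set of its predecessor and `c₀`, which together have at most
`2b` colours, so `b` colours remain in its list of `3b`. Avoiding `c₀` at every step also makes
the last vertex, the other neighbour of `v₀`, compatible with `c₀`.
-/

/-- An (L,b)-coloring of `G`: each vertex gets a `b`-element subset of its list,
with disjoint sets on adjacent vertices. -/
def IsLbColoring {V : Type*} (G : SimpleGraph V) (L : V → Finset ℤ) (b : ℕ)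
    (c : V → Finset ℤ) : Prop :=
  (∀ v, c v ⊆ L v) ∧ (∀ v, (c v).card = b) ∧ ∀ ⦃v w⦄, G.Adj v w → Disjoint (c v) (c w)

/-- `G` is (a,b)-choosable. -/
def Choosable {V : Type*} (G : SimpleGraph V) (a b : ℕ) : Prop :=
  ∀ L : V → Finset ℤ, (∀ v, (L v).card = a) → ∃ c, IsLbColoring G L b c

/-- `G` is free (a,b)-choosable. -/
def FreeChoosable {V : Type*} (G : SimpleGraph V) (a b : ℕ) : Prop :=
  ∀ L : V → Finset ℤ, (∀ v, (L v).card = a) →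
    ∀ v₀ : V, ∀ c₀ : Finset ℤ, c₀ ⊆ L v₀ → c₀.card = b →
      ∃ c, IsLbColoring G L b c ∧ c v₀ = c₀

/-- The cycle `C n` on vertex set `ZMod n`. -/
def cycleGraph (n : ℕ) : SimpleGraph (ZMod n) :=
  SimpleGraph.fromRel (fun i j => j = i + 1)

open Finset

theorem Finset.exists_subset_card_eq_disjoint {α : Type*} [DecidableEq α] {s t : Finset α} {b : ℕ}
    (h : #t + b ≤ #s) : ∃ c ⊆ s, #c = b ∧ Disjoint c t := by
  obtain ⟨c, hcs, hc⟩ := exists_subset_card_eq (s := s \ t) (n := b) (by grind [le_card_sdiff])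
  exact ⟨c, hcs.trans sdiff_subset, hc, sdiff_disjoint.mono_left hcs⟩

theorem exists_seq_disjoint_succ_of_three_mul_le_card {α : Type*} [DecidableEq α] {b : ℕ}
    (L : ℕ → Finset α) (hL : ∀ k, 3 * b ≤ #(L k)) (c₀ : Finset α) (hc₀L : c₀ ⊆ L 0) (hc₀ : #c₀ = b) :
    ∃ f : ℕ → Finset α, f 0 = c₀ ∧ (∀ k, f k ⊆ L k ∧ #(f k) = b) ∧
      ∀ k, Disjoint (f k) (f (k + 1)) ∧ Disjoint (f (k + 1)) c₀ := by
  have step : ∀ (k : ℕ) (prev : Finset α), #prev = b →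
      ∃ c ⊆ L (k + 1), #c = b ∧ Disjoint c (prev ∪ c₀) := fun k prev hprev =>
    exists_subset_card_eq_disjoint <| by grind [card_union_le]
  choose next hnextL hnext using step
  let g : ℕ → {c : Finset α // #c = b} :=
    Nat.rec ⟨c₀, hc₀⟩ fun k prev => ⟨next k prev prev.2, (hnext k prev prev.2).1⟩
  refine ⟨fun k => (g k).1, rfl, fun k => ⟨?_, (g k).2⟩, fun k => ?_⟩
  · cases k with
    | zero => exact hc₀L
    | succ k => exact hnextL k _ _
  · have hd := (hnext k (g k).1 (g k).2).2
    rw [disjoint_union_right] at hd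
    exact ⟨hd.1.symm, hd.2⟩

theorem ZMod.val_add_one_eq_or {n : ℕ} (hn : 2 ≤ n) (x : ZMod n) :
    (x + 1).val = x.val + 1 ∨ (x + 1).val = 0 ∧ x.val + 1 = n := by
  have : NeZero n := ⟨by omega⟩
  rw [val_add, val_one'' (by omega)]
  have := x.val_lt
  rcases (show x.val + 1 < n ∨ x.val + 1 = n by omega) with h | h
  · exact .inl (Nat.mod_eq_of_lt h)
  · exact .inr ⟨by simp [h], h⟩

theorem disjoint_val_val_add_one {α : Type*} {n : ℕ} (hn : 2 ≤ n) {f : ℕ → Finset α}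
    (hstep : ∀ k, Disjoint (f k) (f (k + 1))) (hwrap : ∀ k, Disjoint (f (k + 1)) (f 0))
    (x : ZMod n) : Disjoint (f x.val) (f (x + 1).val) := by
  rcases ZMod.val_add_one_eq_or hn x with h | ⟨h, hx⟩
  · rw [h]; exact hstep _
  · obtain ⟨k, hk⟩ : ∃ k, x.val = k + 1 := ⟨x.val - 1, by omega⟩
    rw [h, hk]; exact hwrap k

theorem stmt19_general (n b : ℕ) (hn : 3 ≤ n) :
    FreeChoosable (cycleGraph n) (3 * b) b := by
  intro L hL v₀ c₀ hc₀L hc₀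
  have : NeZero n := ⟨by omega⟩
  obtain ⟨f, hf0, hfL, hfdisj⟩ := exists_seq_disjoint_succ_of_three_mul_le_card
    (fun k => L (v₀ + k)) (fun k => (hL _).ge) c₀ (by simpa using hc₀L) hc₀
  have hadj : ∀ v, Disjoint (f (v - v₀).val) (f (v + 1 - v₀).val) := fun v => by
    rw [add_sub_right_comm]
    exact disjoint_val_val_add_one (by omega) (fun k => (hfdisj k).1)
      (fun k => hf0 ▸ (hfdisj k).2) _
  refine ⟨fun v => f (v - v₀).val, ⟨fun v => ?_, fun v => (hfL _).2, ?_⟩, by simpa using hf0⟩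
  · simpa using (hfL (v - v₀).val).1
  · rintro v w ⟨-, rfl | rfl⟩
    exacts [hadj v, (hadj w).symm]

/-- every cycle `C_n` with `n ≥ 3` is free (3b,b)-choosable. -/
theorem stmt19 (n b : ℕ) (hn : 3 ≤ n) (hb : 0 < b) :
    FreeChoosable (cycleGraph n) (3 * b) b :=
  stmt19_general n b hn
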